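/- Suppose n > 1 and S ⊆ 𝔽₂^{2n} is a Sidon set of size 2ⁿ. If 6 · (e_max(S) − e_min(S)) ≤ 2ⁿ − 2, then S is a maximal Sidon set. -/

import Mathlib

/-!
If `S` were not maximal, some `x₀ ∉ S` would have exclude multiplicity `0`, so `e_min(S) = 0`.
In characteristic two a sum of three distinct elements of a Sidon set lies outside the set, so
the multiplicities over the `2ⁿ(2ⁿ - 1)` points outside `S` add up to `C(2ⁿ, 3)`. Since `x₀`
contributes nothing, `C(2ⁿ, 3) ≤ (2ⁿ(2ⁿ - 1) - 1) · e_max(S)`, which contradicts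
`6 · e_max(S) ≤ 2ⁿ - 2` because `6 · C(N, 3) = N(N - 1)(N - 2)` with `N = 2ⁿ`.
-/

/-- `S` is a Sidon set: no pairwise distinct `a, b, c, d` in `S` satisfy `a + b = c + d`. -/
def IsSidon {G : Type*} [AddCommGroup G] (S : Set G) : Prop :=
  ¬ ∃ a b c d : G, a ∈ S ∧ b ∈ S ∧ c ∈ S ∧ d ∈ S ∧
      a ≠ b ∧ a ≠ c ∧ a ≠ d ∧ b ≠ c ∧ b ≠ d ∧ c ≠ d ∧ a + b = c + d

/-- The exclude multiplicity of `x` w.r.t. `S`: the number of 3-element subsets of `S`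
whose elements sum to `x`. -/
def excMult {G : Type*} [AddCommGroup G] [DecidableEq G] (S : Finset G) (x : G) : ℕ :=
  ((S.powersetCard 3).filter (fun T => T.sum id = x)).card

/-- The exclude set of `S`: points outside `S` with positive exclude multiplicity. -/
def excSet {G : Type*} [AddCommGroup G] [DecidableEq G] [Fintype G] (S : Finset G) : Finset G :=
  (Finset.univ \ S).filter (fun x => 0 < excMult S x)

/-- `S` is a maximal Sidon set: a Sidon set not properly contained in any Sidon set. -/
def IsMaximalSidon {G : Type*} [AddCommGroup G] (S : Set G) : Prop :=
  IsSidon S ∧ ∀ T : Set G, IsSidon T → S ⊆ T → T = S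

open Finset

theorem Nat.six_mul_choose_three (N : ℕ) : 6 * N.choose 3 = N * (N - 1) * (N - 2) := by
  have h := Nat.descFactorial_eq_factorial_mul_choose N 3
  simp only [Nat.descFactorial, Nat.factorial, Nat.succ_eq_add_one, Nat.sub_zero] at h
  rw [← h]
  ring

theorem Nat.mul_lt_choose_three_of_six_mul_le {N e : ℕ} (hN : 3 ≤ N) (he : 6 * e ≤ N - 2) :
    (N * (N - 1) - 1) * e < N.choose 3 := by
  have hpair : 0 < N * (N - 1) := Nat.mul_pos (by omega) (by omega)
  refine Nat.lt_of_mul_lt_mul_left (a := 6) ?_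
  calc 6 * ((N * (N - 1) - 1) * e) = (N * (N - 1) - 1) * (6 * e) := by ring
    _ ≤ (N * (N - 1) - 1) * (N - 2) := Nat.mul_le_mul_left _ he
    _ < N * (N - 1) * (N - 2) := Nat.mul_lt_mul_of_pos_right (by omega) (by omega)
    _ = 6 * N.choose 3 := (Nat.six_mul_choose_three N).symm

theorem Finset.sum_le_card_sub_one_mul_of_eq_zero {ι : Type*} [DecidableEq ι] {s : Finset ι}
    {f : ι → ℕ} {e : ℕ} {i : ι} (hi : i ∈ s) (hfi : f i = 0) (hf : ∀ x ∈ s, f x ≤ e) :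
    ∑ x ∈ s, f x ≤ (s.card - 1) * e := by
  rw [← add_sum_erase s f hi, hfi, zero_add, ← card_erase_of_mem hi]
  exact sum_le_card_nsmul _ _ _ fun x hx => hf x (mem_of_mem_erase hx)

theorem Finset.exists_sum_eq_add_add_of_mem_powersetCard_three {G : Type*} [AddCommMonoid G]
    [DecidableEq G] {S T : Finset G} (hT : T ∈ S.powersetCard 3) :
    ∃ a ∈ S, ∃ b ∈ S, ∃ c ∈ S, a ≠ b ∧ a ≠ c ∧ b ≠ c ∧ T.sum id = a + b + c := by
  obtain ⟨hsub, hcard⟩ := mem_powersetCard.1 hT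
  obtain ⟨a, b, c, hab, hac, hbc, rfl⟩ := card_eq_three.1 hcard
  refine ⟨a, hsub (by simp), b, hsub (by simp), c, hsub (by simp), hab, hac, hbc, ?_⟩
  rw [sum_insert (by simp [hab, hac]), sum_pair hbc, id, id, id, add_assoc]

section CharTwo

variable {G : Type*} [AddCommGroup G] [Module (ZMod 2) G]

theorem ZModModule.add_eq_zero_iff_eq {x y : G} : x + y = 0 ↔ x = y := by
  rw [add_eq_zero_iff_eq_neg, ZModModule.neg_eq_self]

theorem IsSidon.add_add_ne {S : Set G} (hS : IsSidon S) {a b c d : G} (ha : a ∈ S) (hb : b ∈ S)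
    (hc : c ∈ S) (hd : d ∈ S) (hab : a ≠ b) (hac : a ≠ c) (hbc : b ≠ c) (hda : d ≠ a)
    (hdb : d ≠ b) (hdc : d ≠ c) : a + b + c ≠ d := fun h =>
  hS ⟨a, b, c, d, ha, hb, hc, hd, hab, hac, hda.symm, hbc, hdb.symm, hdc.symm, by
    rw [← h, add_comm c, add_assoc, ZModModule.add_self, add_zero]⟩

theorem IsSidon.add_add_notMem {S : Set G} (hS : IsSidon S) {a b c : G} (ha : a ∈ S)
    (hb : b ∈ S) (hc : c ∈ S) (hab : a ≠ b) (hac : a ≠ c) (hbc : b ≠ c) : a + b + c ∉ S := by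
  intro hd
  refine hS.add_add_ne ha hb hc hd hab hac hbc ?_ ?_ ?_ rfl
  · intro h
    rw [add_assoc, add_eq_left, ZModModule.add_eq_zero_iff_eq] at h
    exact hbc h
  · intro h
    rw [add_comm a, add_assoc, add_eq_left, ZModModule.add_eq_zero_iff_eq] at h
    exact hac h
  · intro h
    rw [add_eq_right, ZModModule.add_eq_zero_iff_eq] at h
    exact hab h

variable [DecidableEq G]

theorem IsSidon.sum_notMem_of_mem_powersetCard_three {S T : Finset G}
    (hS : IsSidon (S : Set G)) (hT : T ∈ S.powersetCard 3) : T.sum id ∉ S := by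
  obtain ⟨a, ha, b, hb, c, hc, hab, hac, hbc, hsum⟩ :=
    exists_sum_eq_add_add_of_mem_powersetCard_three hT
  rw [hsum]
  exact hS.add_add_notMem ha hb hc hab hac hbc

theorem IsSidon.isMaximalSidon_of_excMult_pos {S : Finset G} (hS : IsSidon (S : Set G))
    (hpos : ∀ x ∉ S, 0 < excMult S x) : IsMaximalSidon (S : Set G) := by
  refine ⟨hS, fun T hT hST => (Set.Subset.antisymm · hST) fun t ht => ?_⟩
  by_contra htS
  obtain ⟨U, hU⟩ := card_pos.1 (hpos t htS)
  obtain ⟨hUS, hUt⟩ := mem_filter.1 hU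
  obtain ⟨a, ha, b, hb, c, hc, hab, hac, hbc, hsum⟩ :=
    exists_sum_eq_add_add_of_mem_powersetCard_three hUS
  refine hT.add_add_ne (hST ha) (hST hb) (hST hc) ht hab hac hbc ?_ ?_ ?_ (hsum ▸ hUt)
  · rintro rfl; exact htS ha
  · rintro rfl; exact htS hb
  · rintro rfl; exact htS hc

theorem IsSidon.sum_excMult_compl [Fintype G] {S : Finset G} (hS : IsSidon (S : Set G)) :
    ∑ x ∈ univ \ S, excMult S x = S.card.choose 3 := by
  rw [← card_powersetCard 3 S]
  refine (card_eq_sum_card_fiberwise fun T hT => ?_).symm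
  exact mem_sdiff.2 ⟨mem_univ _, hS.sum_notMem_of_mem_powersetCard_three hT⟩

end CharTwo

/-- If `n > 1` and `S ⊆ 𝔽₂^{2n}` is a Sidon set of size `2ⁿ` with
`6 · (e_max(S) − e_min(S)) ≤ 2ⁿ − 2`, then `S` is a maximal Sidon set. -/
theorem emax_sub_emin_small_implies_maximal (n : ℕ) (hn : 1 < n)
    (S : Finset (Fin (2 * n) → ZMod 2))
    (hS : IsSidon (S : Set (Fin (2 * n) → ZMod 2))) (hcard : S.card = 2 ^ n)
    (hbound : 6 * (sSup {k | ∃ x ∉ S, excMult S x = k} -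
        sInf {k | ∃ x ∉ S, excMult S x = k}) ≤ 2 ^ n - 2) :
    IsMaximalSidon (S : Set (Fin (2 * n) → ZMod 2)) := by
  classical
  refine hS.isMaximalSidon_of_excMult_pos fun x₀ hx₀ => Nat.pos_of_ne_zero fun hzero => ?_
  set N := 2 ^ n
  have hN : 3 ≤ N := le_trans (by norm_num) (Nat.pow_le_pow_right two_pos hn)
  have hmin : sInf {k | ∃ x ∉ S, excMult S x = k} = 0 :=
    Nat.sInf_eq_zero.2 (.inl ⟨x₀, hx₀, hzero⟩)
  have hmax : ∀ x ∈ univ \ S, excMult S x ≤ sSup {k | ∃ x ∉ S, excMult S x = k} := by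
    have hfin : {k | ∃ x ∉ S, excMult S x = k}.Finite :=
      (Set.finite_range (excMult S)).subset fun _ ⟨y, _, hy⟩ => ⟨y, hy⟩
    exact fun x hx => le_csSup hfin.bddAbove ⟨x, (mem_sdiff.1 hx).2, rfl⟩
  have hcompl : (univ \ S).card = N * (N - 1) := by
    rw [card_univ_sdiff, hcard, Nat.mul_sub_one]
    simp [N, ← pow_add, two_mul]
  rw [hmin, Nat.sub_zero] at hbound
  have hsum := sum_le_card_sub_one_mul_of_eq_zero (mem_sdiff.2 ⟨mem_univ x₀, hx₀⟩) hzero hmax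
  rw [hS.sum_excMult_compl, hcard, hcompl] at hsum
  exact hsum.not_gt (Nat.mul_lt_choose_three_of_six_mul_le hN hbound)
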